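/- arXiv:0811.1570 — 2 statements merged into one kernel-verified Lean document; each statement's English description precedes it below -/
import Mathlib

section
/- Cyclic subsystem codes, Euclidean case: Let D be a k-dimensional self-orthogonal (D ⊆ D^⊥) cyclic code of length n over F_q with gcd(n,q) = 1, and let T_D and T_{D^⊥} be the defining sets of D and D^⊥. Let T be a subset of T_D \ T_{D^⊥} that is a union of cyclotomic cosets, and let C be the cyclic code of length n over F_q with defining set T_C = T_D \ (T ∪ T^{−1}). If r = |T ∪ T^{−1}| satisfies 0 ≤ r < n − 2k, then C ∩ C^⊥ = D, dim_{F_q} C = k + r, and there exists an [[n, n−2k−r, r, d]]_q Clifford subsystem code with d = wt(D^⊥ \ C), the minimum Hamming weight of a vector in D^⊥ not in C. -/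
open Finset

/-- Symplectic weight of a vector `(a|b) ∈ F_q^n × F_q^n`. -/
noncomputable def swt {F : Type} [Field F] {n : ℕ} (v : (Fin n → F) × (Fin n → F)) : ℕ :=
  {i : Fin n | ¬(v.1 i = 0 ∧ v.2 i = 0)}.ncard

/-- Minimum symplectic weight of a nonzero element of a set. -/
noncomputable def minSwt {F : Type} [Field F] {n : ℕ} (S : Set ((Fin n → F) × (Fin n → F))) : ℕ :=
  sInf (swt '' (S \ {0}))

/-- The trace-symplectic form on `F_q^{2n}`. -/
noncomputable def trSympForm (p : ℕ) {F : Type} [Field F] [Fintype F] [CharP F p] {n : ℕ}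
    (u v : (Fin n → F) × (Fin n → F)) : ZMod p :=
  letI := ZMod.algebra F p
  Algebra.trace (ZMod p) F (∑ i, (v.1 i * u.2 i - u.1 i * v.2 i))

/-- The trace-symplectic dual of a set of vectors in `F_q^{2n}`. -/
def sympDual (p : ℕ) {F : Type} [Field F] [Fintype F] [CharP F p] {n : ℕ}
    (C : Set ((Fin n → F) × (Fin n → F))) : Set ((Fin n → F) × (Fin n → F)) :=
  {v | ∀ w ∈ C, trSympForm p v w = 0}

/-- `C` (an additive code in `F_q^{2n}`) defines an `((n,K,R,d))_q` Clifford subsystem code. -/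
def IsSubsysCode (p : ℕ) {F : Type} [Field F] [Fintype F] [CharP F p] {n : ℕ}
    (C : AddSubgroup ((Fin n → F) × (Fin n → F))) (K R d : ℕ) : Prop :=
  let Ds : Set ((Fin n → F) × (Fin n → F)) := ↑C ∩ sympDual p ↑C
  Nat.card Ds * (K * R) = Fintype.card F ^ n ∧
  Nat.card C * K = Fintype.card F ^ n * R ∧
  (sympDual p Ds = ↑C → d = minSwt (sympDual p Ds)) ∧
  (sympDual p Ds ≠ ↑C → d = minSwt (sympDual p Ds \ ↑C))

/-- The subsystem code defined by `C` is pure to `d'`. -/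
def PureTo {F : Type} [Field F] {n : ℕ}
    (C : AddSubgroup ((Fin n → F) × (Fin n → F))) (d' : ℕ) : Prop :=
  ∀ v ∈ C, v ≠ 0 → d' ≤ swt v

/-- The subsystem code defined by `C` is `F_q`-linear. -/
def FqLinear {F : Type} [Field F] {n : ℕ}
    (C : AddSubgroup ((Fin n → F) × (Fin n → F))) : Prop :=
  ∀ (a : F), ∀ v ∈ C, a • v ∈ C

/-- Hamming weight.-/
noncomputable def hwt {F : Type} [Field F] {n : ℕ} (v : Fin n → F) : ℕ := {i | v i ≠ 0}.ncard

/-- Minimum Hamming weight of a nonzero element of a set. -/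
noncomputable def minHwt {F : Type} [Field F] {n : ℕ} (S : Set (Fin n → F)) : ℕ :=
  sInf (hwt '' (S \ {0}))

/-- Euclidean dual. -/
def euclDual {F : Type} [Field F] {n : ℕ} (C : Set (Fin n → F)) : Set (Fin n → F) :=
  {x | ∀ y ∈ C, ∑ i, x i * y i = 0}

/-- Hermitian dual (with respect to `x ↦ x^q`). -/
def hermDual (q : ℕ) {K : Type} [Field K] {n : ℕ} (C : Set (Fin n → K)) : Set (Fin n → K) :=
  {x | ∀ y ∈ C, ∑ i, x i ^ q * y i = 0}

/-- Cyclotomic coset of `a` modulo `n` (w.r.t. multiplier `q`). -/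
def cycCoset (q n : ℕ) (a : ZMod n) : Set (ZMod n) := {x | ∃ i : ℕ, x = a * (q : ZMod n) ^ i}

/-!
Everything is read off defining sets. For a union of cyclotomic cosets `S`, the polynomial
`∏_{t ∈ S} (X - α^t)` is fixed by the `q`-Frobenius, so it has coefficients in `F_q`; hence the
cyclic code `B_S` with defining set `S` has dimension `n - |S|`, and every `t ∉ S` fails to be
a root of some codeword, so `B_S ≤ B_{S'}` forces `S' ⊆ S`. Orthogonality of the characters
`t ↦ α^{ti}` gives `B_S^⊥ = B_{(-S)ᶜ}`. Self-orthogonality of `D = B_{T_D}` then reads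
`(-T_D)ᶜ ⊆ T_D`, the hypothesis `T ∩ T_{D^⊥} = ∅` forces `-T ⊆ T_D`, and the defining set
`T_C ∪ (-T_C)ᶜ` of `C ∩ C^⊥` is exactly `T_D`.

The subsystem code is given by `Q = C × C`, whose trace-symplectic dual is `C^⊥ × C^⊥`; so
`Q ∩ Q^⊥ₛ = D × D`, its dual is `D^⊥ × D^⊥`, and a pair in `D^⊥ × D^⊥` outside `C × C` has a component in
`D^⊥ \ C`, which gives the distance.
-/

open Polynomial
open scoped Pointwise

section Euclidean

variable {F : Type} [Field F] {n : ℕ}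

def dualCode (V : Submodule F (Fin n → F)) : Submodule F (Fin n → F) :=
  LinearMap.BilinForm.orthogonal (dotProductBilin F F) V

lemma mem_dualCode {V : Submodule F (Fin n → F)} {x : Fin n → F} :
    x ∈ dualCode V ↔ ∀ y ∈ V, x ⬝ᵥ y = 0 := by
  simp only [dualCode, LinearMap.BilinForm.mem_orthogonal_iff, dotProductBilin_apply_apply,
    dotProduct_comm]

lemma coe_dualCode (V : Submodule F (Fin n → F)) :
    (dualCode V : Set (Fin n → F)) = euclDual (V : Set (Fin n → F)) := by
  ext x
  exact mem_dualCode

lemma finrank_dualCode (V : Submodule F (Fin n → F)) :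
    Module.finrank F (dualCode V) = n - Module.finrank F V := by
  have hnd : (dotProductBilin F F : LinearMap.BilinForm F (Fin n → F)).Nondegenerate :=
    ⟨fun x hx => dotProduct_eq_zero x hx,
      fun y hy => dotProduct_eq_zero y fun x => dotProduct_comm y x ▸ hy x⟩
  rw [dualCode, LinearMap.BilinForm.finrank_orthogonal hnd, Module.finrank_fin_fun]

end Euclidean

section Symplectic

variable {F : Type} [Field F] {n : ℕ}

lemma hwt_le_swt_left (u v : Fin n → F) : hwt u ≤ swt (u, v) :=
  Set.ncard_le_ncard (fun _ hi hc => hi hc.1)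

lemma hwt_le_swt_right (u v : Fin n → F) : hwt v ≤ swt (u, v) :=
  Set.ncard_le_ncard (fun _ hi hc => hi hc.2)

lemma swt_mk_zero (u : Fin n → F) : swt (u, (0 : Fin n → F)) = hwt u := by
  simp [swt, hwt]

lemma minSwt_prod_sdiff_prod {U W : Set (Fin n → F)} (hU : 0 ∈ U) (hW : 0 ∈ W)
    (hne : (U \ W).Nonempty) : minSwt (U ×ˢ U \ W ×ˢ W) = minHwt (U \ W) := by
  have mem_left {u : Fin n → F} (huU : u ∈ U) (huW : u ∉ W) :
      ((u, 0) : (Fin n → F) × (Fin n → F)) ∈ (U ×ˢ U \ W ×ˢ W) \ {0} :=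
    ⟨⟨⟨huU, hU⟩, fun h => huW h.1⟩, fun h => huW ((Prod.mk_eq_zero.mp h).1 ▸ hW)⟩
  have mem_diff {u : Fin n → F} (huU : u ∈ U) (huW : u ∉ W) : u ∈ (U \ W) \ {0} :=
    ⟨⟨huU, huW⟩, fun h => huW (h ▸ hW)⟩
  have hne' : (hwt '' ((U \ W) \ {0})).Nonempty :=
    let ⟨u, hu⟩ := hne; ⟨_, u, mem_diff hu.1 hu.2, rfl⟩
  unfold minSwt minHwt
  apply le_antisymm
  · obtain ⟨u, ⟨⟨huU, huW⟩, -⟩, hu⟩ := Nat.sInf_mem hne'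
    exact Nat.sInf_le ⟨(u, 0), mem_left huU huW, by rw [swt_mk_zero, hu]⟩
  · refine le_csInf (hne'.mono ?_) ?_
    · rintro _ ⟨u, ⟨⟨huU, huW⟩, -⟩, rfl⟩
      exact ⟨(u, 0), mem_left huU huW, swt_mk_zero u⟩
    · rintro _ ⟨⟨u, v⟩, ⟨⟨⟨huU, hvU⟩, huvW⟩, -⟩, rfl⟩
      by_cases huW : u ∈ W
      · have hvW : v ∉ W := fun hvW => huvW ⟨huW, hvW⟩
        exact (Nat.sInf_le (Set.mem_image_of_mem hwt (mem_diff hvU hvW))).trans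
          (hwt_le_swt_right u v)
      · exact (Nat.sInf_le (Set.mem_image_of_mem hwt (mem_diff huU huW))).trans
          (hwt_le_swt_left u v)

variable [Fintype F] (p : ℕ) [CharP F p]

lemma sympDual_prod (V W : Submodule F (Fin n → F)) :
    sympDual p ((V : Set (Fin n → F)) ×ˢ (W : Set (Fin n → F))) =
      (dualCode W : Set (Fin n → F)) ×ˢ (dualCode V : Set (Fin n → F)) := by
  have := Fact.mk (CharP.char_is_prime F p)
  let := ZMod.algebra F p
  have trace_nondeg (s : F) (h : ∀ c : F, Algebra.trace (ZMod p) F (c * s) = 0) : s = 0 :=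
    (traceForm_nondegenerate (ZMod p) F).1 s fun c => by
      rw [Algebra.traceForm_apply, mul_comm]; exact h c
  have hform (v w : (Fin n → F) × (Fin n → F)) :
      trSympForm p v w = Algebra.trace (ZMod p) F (w.1 ⬝ᵥ v.2 - v.1 ⬝ᵥ w.2) := by
    simp only [trSympForm, dotProduct, Finset.sum_sub_distrib]
  ext v
  constructor
  · intro hv
    refine ⟨mem_dualCode.mpr fun b hb => trace_nondeg _ fun c => ?_,
      mem_dualCode.mpr fun a ha => trace_nondeg _ fun c => ?_⟩
    · have h := hv (0, (-c) • b) ⟨V.zero_mem, W.smul_mem _ hb⟩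
      simpa [hform, dotProduct_smul] using h
    · have h := hv (c • a, 0) ⟨V.smul_mem _ ha, W.zero_mem⟩
      simpa [hform, dotProduct_comm v.2] using h
  · rintro ⟨h1, h2⟩ w ⟨hw1, hw2⟩
    rw [hform, dotProduct_comm, mem_dualCode.mp h2 _ hw1, mem_dualCode.mp h1 _ hw2, sub_zero,
      map_zero]

theorem isSubsysCode_prod {C D : Submodule F (Fin n → F)} {k r : ℕ}
    (hCD : C ⊓ dualCode C = D) (hDC : ¬ dualCode D ≤ C) (hD : Module.finrank F D = k)
    (hC : Module.finrank F C = k + r) (hkr : 2 * k + r ≤ n) :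
    IsSubsysCode p (C.prod C).toAddSubgroup (Fintype.card F ^ (n - 2 * k - r))
      (Fintype.card F ^ r) (minHwt ((dualCode D : Set (Fin n → F)) \ C)) := by
  have hQ : (((C.prod C).toAddSubgroup : AddSubgroup _) : Set ((Fin n → F) × (Fin n → F))) =
      (C : Set (Fin n → F)) ×ˢ (C : Set (Fin n → F)) := Submodule.prod_coe C C
  have hDs : (C : Set (Fin n → F)) ×ˢ (C : Set (Fin n → F)) ∩ sympDual p (C ×ˢ C) =
      (D : Set (Fin n → F)) ×ˢ (D : Set (Fin n → F)) := by
    rw [sympDual_prod, Set.prod_inter_prod, ← Submodule.coe_inf, hCD]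
  have card_prod (V : Submodule F (Fin n → F)) :
      Nat.card ((V : Set (Fin n → F)) ×ˢ (V : Set (Fin n → F)) : Set _) =
        Fintype.card F ^ (2 * Module.finrank F V) := by
    rw [Nat.card_coe_set_eq, Set.ncard_prod, ← Nat.card_coe_set_eq, SetLike.coe_sort_coe,
      Module.natCard_eq_pow_finrank (K := F), Nat.card_eq_fintype_card, two_mul, pow_add]
  have hcardQ : Nat.card (C.prod C).toAddSubgroup =
      Nat.card ((C : Set (Fin n → F)) ×ˢ (C : Set (Fin n → F)) : Set _) :=
    Nat.card_congr (Equiv.setCongr hQ)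
  have hne : (dualCode D : Set (Fin n → F)) ×ˢ (dualCode D : Set (Fin n → F)) ≠
      (C : Set (Fin n → F)) ×ˢ (C : Set (Fin n → F)) :=
    fun h => hDC ((Set.prod_subset_prod_iff' ⟨(0, 0), zero_mem _, zero_mem _⟩).mp h.subset).1
  simp only [IsSubsysCode, hQ, hDs]
  rw [sympDual_prod]
  refine ⟨?_, ?_, fun h => absurd h hne, fun _ => ?_⟩
  · rw [card_prod, hD, ← pow_add, ← pow_add]
    congr 1
    omega
  · rw [hcardQ, card_prod, hC, ← pow_add, ← pow_add]
    congr 1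
    omega
  · exact (minSwt_prod_sdiff_prod (zero_mem _) (zero_mem _) (Set.not_subset.mp hDC)).symm

end Symplectic

def IsUnionOfCyclotomicCosets {n : ℕ} (q : ℕ) (S : Finset (ZMod n)) : Prop :=
  ∀ t ∈ S, (q : ZMod n) * t ∈ S

namespace IsUnionOfCyclotomicCosets

variable {n q : ℕ} {S S' : Finset (ZMod n)}

lemma image_mul_eq (hq : IsUnit (q : ZMod n)) (hS : IsUnionOfCyclotomicCosets q S) :
    S.image ((q : ZMod n) * ·) = S :=
  Finset.eq_of_subset_of_card_le (Finset.image_subset_iff.mpr hS)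
    (Finset.card_image_of_injective _ hq.mul_right_injective).ge

lemma mem_of_mul_mem (hq : IsUnit (q : ZMod n)) (hS : IsUnionOfCyclotomicCosets q S)
    {t : ZMod n} (ht : (q : ZMod n) * t ∈ S) : t ∈ S := by
  rw [← hS.image_mul_eq hq] at ht
  obtain ⟨s, hs, hst⟩ := Finset.mem_image.mp ht
  rwa [← hq.mul_right_injective hst]

lemma union (hS : IsUnionOfCyclotomicCosets q S) (hS' : IsUnionOfCyclotomicCosets q S') :
    IsUnionOfCyclotomicCosets q (S ∪ S') := by
  intro t ht
  rcases Finset.mem_union.mp ht with h | h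
  exacts [Finset.mem_union_left _ (hS t h), Finset.mem_union_right _ (hS' t h)]

lemma sdiff (hq : IsUnit (q : ZMod n)) (hS : IsUnionOfCyclotomicCosets q S)
    (hS' : IsUnionOfCyclotomicCosets q S') : IsUnionOfCyclotomicCosets q (S \ S') := by
  intro t ht
  rw [Finset.mem_sdiff] at ht ⊢
  exact ⟨hS t ht.1, fun h => ht.2 (hS'.mem_of_mul_mem hq h)⟩

lemma compl [NeZero n] (hq : IsUnit (q : ZMod n)) (hS : IsUnionOfCyclotomicCosets q S) :
    IsUnionOfCyclotomicCosets q Sᶜ := by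
  simpa only [Finset.compl_eq_univ_sdiff] using sdiff hq (fun t _ => Finset.mem_univ _) hS

lemma neg (hS : IsUnionOfCyclotomicCosets q S) : IsUnionOfCyclotomicCosets q (-S) := by
  intro t ht
  rw [Finset.mem_neg'] at ht ⊢
  simpa only [mul_neg] using hS _ ht

end IsUnionOfCyclotomicCosets

section Cyclic

variable {F : Type} [Field F] {n : ℕ} {E : Type} [Field E] [Algebra F E] {α : E}

/-- `dft α t c` is `c(α ^ t)`, for the word `c` read as the polynomial `∑ cᵢ Xⁱ`. -/
def dft (α : E) (t : ZMod n) : (Fin n → F) →ₗ[F] E where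
  toFun c := ∑ i : Fin n, algebraMap F E (c i) * α ^ (t * ((i : ℕ) : ZMod n)).val
  map_add' c c' := by simp only [Pi.add_apply, map_add, add_mul, Finset.sum_add_distrib]
  map_smul' a c := by
    simp only [Pi.smul_apply, smul_eq_mul, map_mul, RingHom.id_apply, Finset.mul_sum,
      Algebra.smul_def, mul_assoc]

variable (F) in
def cyclicCode (α : E) (S : Finset (ZMod n)) : Submodule F (Fin n → F) :=
  ⨅ t ∈ S, LinearMap.ker (dft α t)

lemma mem_cyclicCode {S : Finset (ZMod n)} {c : Fin n → F} :
    c ∈ cyclicCode F α S ↔ ∀ t ∈ S, dft α t c = 0 := by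
  simp [cyclicCode]

lemma cyclicCode_anti {S S' : Finset (ZMod n)} (h : S ⊆ S') :
    cyclicCode F α S' ≤ cyclicCode F α S :=
  fun _ hc => mem_cyclicCode.mpr fun t ht => mem_cyclicCode.mp hc t (h ht)

lemma cyclicCode_union [DecidableEq (ZMod n)] (S S' : Finset (ZMod n)) :
    cyclicCode F α (S ∪ S') = cyclicCode F α S ⊓ cyclicCode F α S' := by
  ext c
  simp only [Submodule.mem_inf, mem_cyclicCode, Finset.mem_union, or_imp, forall_and]

variable [NeZero n]

lemma pow_val_mul_natCast (hα : α ^ n = 1) (t : ZMod n) (i : ℕ) :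
    α ^ (t * (i : ZMod n)).val = (α ^ t.val) ^ i := by
  rw [← AddChar.zmodChar_apply hα, mul_comm, ← nsmul_eq_mul, AddChar.map_nsmul_eq_pow,
    AddChar.zmodChar_apply]

lemma dft_eq_aeval [DecidableEq F] (hα : α ^ n = 1) (t : ZMod n) (c : Fin n → F) :
    dft α t c = aeval (α ^ t.val) (ofFn n c) := by
  simp only [ofFn_eq_sum_monomial, map_sum, aeval_monomial, ← pow_val_mul_natCast hα]
  rfl

lemma pow_val_injective (hα : IsPrimitiveRoot α n) :
    Function.Injective fun t : ZMod n => α ^ t.val :=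
  fun s t h => ZMod.val_injective n (hα.pow_inj (ZMod.val_lt s) (ZMod.val_lt t) h)

lemma mem_cyclicCode_iff_dvd [DecidableEq F] (hα : IsPrimitiveRoot α n) {S : Finset (ZMod n)}
    {c : Fin n → F} :
    c ∈ cyclicCode F α S ↔ ∏ t ∈ S, (X - C (α ^ t.val)) ∣ (ofFn n c).map (algebraMap F E) := by
  simp only [mem_cyclicCode, dft_eq_aeval hα.pow_eq_one, aeval_def, ← eval_map, ← IsRoot.def,
    ← dvd_iff_isRoot]
  have hcop := pairwise_coprime_X_sub_C (pow_val_injective hα)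
  refine ⟨fun h => ?_, fun h t ht => ?_⟩
  · exact Finset.prod_dvd_of_coprime (I := ZMod n) (s := fun t => X - C (α ^ t.val))
      (hcop.set_pairwise (S : Set (ZMod n))) h
  · exact (Finset.dvd_prod_of_mem (fun t : ZMod n => X - C (α ^ t.val)) ht).trans h

lemma dotProduct_mul_eq_sum_dft (hα : IsPrimitiveRoot α n) (x y : Fin n → F) :
    (n : E) * algebraMap F E (x ⬝ᵥ y) = ∑ t : ZMod n, dft α (-t) x * dft α t y := by
  classical
  set ψ := AddChar.zmodChar n hα.pow_eq_one
  have hψ : ψ.IsPrimitive := AddChar.zmodChar_primitive_of_primitive_root n hα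
  have hcast (i j : Fin n) : ((j : ℕ) : ZMod n) - (i : ℕ) = 0 ↔ i = j := by
    rw [sub_eq_zero, ZMod.natCast_eq_natCast_iff', Nat.mod_eq_of_lt i.isLt,
      Nat.mod_eq_of_lt j.isLt, eq_comm, Fin.val_inj]
  calc (n : E) * algebraMap F E (x ⬝ᵥ y)
      = ∑ i, ∑ j, algebraMap F E (x i) * algebraMap F E (y j) *
          ∑ t : ZMod n, ψ (t * ((j : ℕ) - (i : ℕ))) := by
        simp only [AddChar.sum_mulShift _ hψ, hcast, ZMod.card, Nat.cast_ite, Nat.cast_zero,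
          mul_ite, mul_zero, Finset.sum_ite_eq, Finset.mem_univ, if_true, dotProduct, map_sum,
          map_mul, Finset.mul_sum]
        exact Finset.sum_congr rfl fun i _ => by ring
    _ = ∑ t : ZMod n, ∑ i, ∑ j, algebraMap F E (x i) * algebraMap F E (y j) *
          ψ (t * ((j : ℕ) - (i : ℕ))) := by
        simp only [Finset.mul_sum]
        rw [Finset.sum_congr rfl fun i _ => Finset.sum_comm, Finset.sum_comm]
    _ = ∑ t : ZMod n, dft α (-t) x * dft α t y := by
        refine Finset.sum_congr rfl fun t _ => ?_
        rw [dft, dft, LinearMap.coe_mk, AddHom.coe_mk, LinearMap.coe_mk, AddHom.coe_mk,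
          Finset.sum_mul_sum]
        refine Finset.sum_congr rfl fun i _ => Finset.sum_congr rfl fun j _ => ?_
        rw [mul_sub, sub_eq_neg_add, ← neg_mul, AddChar.map_add_eq_mul]
        simp only [ψ, AddChar.zmodChar_apply]
        ring

variable [Fintype F]

lemma isUnit_card_of_isPrimitiveRoot (hα : IsPrimitiveRoot α n) :
    IsUnit (Fintype.card F : ZMod n) := by
  obtain ⟨m, hp, hq⟩ := FiniteField.card F (ringChar F)
  have := charP_of_injective_algebraMap (algebraMap F E).injective (ringChar F)
  have hn : (n : E) ≠ 0 := hα.neZero'.out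
  rw [ZMod.isUnit_iff_coprime, hq]
  exact Nat.Coprime.pow_left _ ((Nat.Prime.coprime_iff_not_dvd hp).mpr
    fun h => hn ((CharP.cast_eq_zero_iff E _ n).mpr h))

lemma mem_range_algebraMap_of_pow_card_eq {x : E} (hx : x ^ Fintype.card F = x) :
    x ∈ Set.range (algebraMap F E) := by
  refine RingHom.mem_range.mp <| (splits_X_pow_nat_card_sub_X (K := F)).mem_range_of_isRoot
    (FiniteField.X_pow_card_sub_X_ne_zero F Finite.one_lt_card) ?_
  simp [Nat.card_eq_fintype_card, hx]

/-- The product is fixed by the `q`-Frobenius, which permutes its factors since `S` is stable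
under `t ↦ q t`, so its coefficients lie in `F`. -/
lemma exists_monic_map_eq_prod (hα : IsPrimitiveRoot α n) {S : Finset (ZMod n)}
    (hS : IsUnionOfCyclotomicCosets (Fintype.card F) S) :
    ∃ g : F[X], g.Monic ∧ g.map (algebraMap F E) = ∏ t ∈ S, (X - C (α ^ t.val)) := by
  have hq := isUnit_card_of_isPrimitiveRoot (F := F) hα
  set P : E[X] := ∏ t ∈ S, (X - C (α ^ t.val))
  have hfrob : P.map (FiniteField.frobeniusAlgHom F E).toRingHom = P := by
    have hpow (t : ZMod n) :
        (α ^ t.val) ^ Fintype.card F = α ^ ((Fintype.card F : ZMod n) * t).val := by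
      rw [mul_comm, pow_val_mul_natCast hα.pow_eq_one]
    simp only [P, Polynomial.map_prod, Polynomial.map_sub, map_X, map_C,
      AlgHom.toRingHom_eq_coe, RingHom.coe_coe, FiniteField.frobeniusAlgHom_apply, hpow]
    rw [← Finset.prod_image (f := fun t : ZMod n => X - C (α ^ t.val))
      fun s _ t _ h => hq.mul_right_injective h, hS.image_mul_eq hq]
  have hcoeff (i : ℕ) : P.coeff i ∈ Set.range (algebraMap F E) :=
    mem_range_algebraMap_of_pow_card_eq (by simpa using congrArg (coeff · i) hfrob)
  obtain ⟨g, hg, -, hmon⟩ := lifts_and_degree_eq_and_monic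
    ((lifts_iff_coeff_lifts P).mpr hcoeff) (monic_prod_of_monic _ _ fun t _ => monic_X_sub_C _)
  exact ⟨g, hmon, hg⟩

/-- `cyclicCode F α S` is the kernel of `c ↦ c mod g`, which maps onto `F[X]/(g)`, of dimension
`deg g = |S|`. -/
theorem finrank_cyclicCode (hα : IsPrimitiveRoot α n) {S : Finset (ZMod n)}
    (hS : IsUnionOfCyclotomicCosets (Fintype.card F) S) :
    Module.finrank F (cyclicCode F α S) = n - S.card := by
  classical
  obtain ⟨g, hg, hgS⟩ := exists_monic_map_eq_prod hα hS
  have hdeg : g.natDegree = S.card := by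
    rw [← natDegree_map (f := algebraMap F E), hgS, natDegree_finsetProd_X_sub_C_eq_card]
  let φ : (Fin n → F) →ₗ[F] AdjoinRoot g := (AdjoinRoot.mkₐ g).toLinearMap ∘ₗ ofFn n
  have hker : LinearMap.ker φ = cyclicCode F α S := by
    ext c
    rw [LinearMap.mem_ker, mem_cyclicCode_iff_dvd hα, ← hgS,
      map_dvd_map _ (algebraMap F E).injective hg]
    exact AdjoinRoot.mk_eq_zero
  have hrange : LinearMap.range φ = ⊤ := by
    refine LinearMap.range_eq_top.mpr fun a => ?_
    obtain ⟨P, rfl⟩ := AdjoinRoot.mk_surjective a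
    have hlt : (P %ₘ g).natDegree < n := by
      rcases eq_or_ne (P %ₘ g) 0 with h0 | h0
      · rw [h0, natDegree_zero]
        exact Nat.pos_of_neZero n
      · refine (natDegree_lt_natDegree h0 (degree_modByMonic_lt P hg)).trans_le ?_
        rw [hdeg]
        simpa using Finset.card_le_univ S
    refine ⟨toFn n (P %ₘ g), ?_⟩
    rw [LinearMap.comp_apply, ofFn_comp_toFn_eq_id_of_natDegree_lt hlt,
      ← AdjoinRoot.modByMonicHom_mk hg]
    exact AdjoinRoot.mk_leftInverse hg _
  have := φ.finrank_range_add_finrank_ker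
  rw [hker, hrange, finrank_top, (AdjoinRoot.powerBasis' hg).finrank, AdjoinRoot.powerBasis'_dim,
    hdeg, Module.finrank_fin_fun] at this
  omega

lemma finrank_cyclicCode_sdiff (hα : IsPrimitiveRoot α n) {S A : Finset (ZMod n)}
    (hS : IsUnionOfCyclotomicCosets (Fintype.card F) S)
    (hA : IsUnionOfCyclotomicCosets (Fintype.card F) A) (hAS : A ⊆ S) :
    Module.finrank F (cyclicCode F α (S \ A)) = Module.finrank F (cyclicCode F α S) + A.card := by
  rw [finrank_cyclicCode hα (hS.sdiff (isUnit_card_of_isPrimitiveRoot hα) hA),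
    finrank_cyclicCode hα hS, Finset.card_sdiff_of_subset hAS]
  have := Finset.card_le_card hAS
  have := ZMod.card n ▸ Finset.card_le_univ S
  omega

lemma exists_dft_ne_zero (hα : IsPrimitiveRoot α n) {S : Finset (ZMod n)}
    (hS : IsUnionOfCyclotomicCosets (Fintype.card F) S) {t : ZMod n} (ht : t ∉ S) :
    ∃ c ∈ cyclicCode F α S, dft α t c ≠ 0 := by
  classical
  obtain ⟨g, hg, hgS⟩ := exists_monic_map_eq_prod hα hS
  have hlt : g.natDegree < n := by
    rw [← natDegree_map (f := algebraMap F E), hgS, natDegree_finsetProd_X_sub_C_eq_card]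
    simpa using Finset.card_lt_univ_of_notMem ht
  refine ⟨toFn n g, ?_, ?_⟩
  · rw [mem_cyclicCode_iff_dvd hα, ofFn_comp_toFn_eq_id_of_natDegree_lt hlt, hgS]
  · rw [dft_eq_aeval hα.pow_eq_one, ofFn_comp_toFn_eq_id_of_natDegree_lt hlt, aeval_def,
      ← eval_map, hgS, eval_prod, Finset.prod_ne_zero_iff]
    intro s hs
    rw [eval_sub, eval_X, eval_C, sub_ne_zero]
    exact fun h => ht (pow_val_injective hα h ▸ hs)

lemma subset_of_cyclicCode_le (hα : IsPrimitiveRoot α n) {S S' : Finset (ZMod n)}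
    (hS : IsUnionOfCyclotomicCosets (Fintype.card F) S)
    (h : cyclicCode F α S ≤ cyclicCode F α S') : S' ⊆ S := by
  intro t ht
  by_contra htS
  obtain ⟨c, hc, hct⟩ := exists_dft_ne_zero hα hS htS
  exact hct (mem_cyclicCode.mp (h hc) t ht)

theorem dualCode_cyclicCode (hα : IsPrimitiveRoot α n) {S : Finset (ZMod n)}
    (hS : IsUnionOfCyclotomicCosets (Fintype.card F) S) :
    dualCode (cyclicCode F α S) = cyclicCode F α (-S)ᶜ := by
  have hq := isUnit_card_of_isPrimitiveRoot (F := F) hα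
  refine (Submodule.eq_of_le_of_finrank_le (fun x hx => mem_dualCode.mpr fun y hy => ?_) ?_).symm
  · have hsum := dotProduct_mul_eq_sum_dft hα x y
    rw [Finset.sum_eq_zero fun t _ => ?_, mul_eq_zero, or_iff_right hα.neZero'.out,
      map_eq_zero_iff _ (algebraMap F E).injective] at hsum
    · exact hsum
    by_cases htS : t ∈ S
    · rw [mem_cyclicCode.mp hy t htS, mul_zero]
    · rw [mem_cyclicCode.mp hx (-t) (by simpa [Finset.mem_neg'] using htS), zero_mul]
  · rw [finrank_dualCode, finrank_cyclicCode hα hS, finrank_cyclicCode hα (hS.neg.compl hq),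
      Finset.card_compl, Finset.card_neg, ZMod.card]

/-- `S'` lies in the defining set `(-S)ᶜ` of the dual; removing `T` from `(-S)ᶜ` still leaves a
superset of `S'`, hence a subcode of the dual, so `T` misses `(-S)ᶜ`. -/
lemma neg_subset_of_disjoint_of_dualCode_eq (hα : IsPrimitiveRoot α n)
    {S T S' : Finset (ZMod n)} (hS : IsUnionOfCyclotomicCosets (Fintype.card F) S)
    (hT : IsUnionOfCyclotomicCosets (Fintype.card F) T)
    (hS' : dualCode (cyclicCode F α S) = cyclicCode F α S') (hTS' : Disjoint T S') :
    -T ⊆ S := by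
  have hq := isUnit_card_of_isPrimitiveRoot (F := F) hα
  rw [dualCode_cyclicCode hα hS] at hS'
  have hR := hS.neg.compl hq
  have hS'R : S' ⊆ (-S)ᶜ := subset_of_cyclicCode_le hα hR hS'.le
  have hRT : (-S)ᶜ ⊆ (-S)ᶜ \ T := subset_of_cyclicCode_le hα (hR.sdiff hq hT)
    ((cyclicCode_anti (Finset.subset_sdiff.mpr ⟨hS'R, hTS'.symm⟩)).trans hS'.ge)
  intro s hs
  rw [Finset.mem_neg'] at hs
  by_contra hsS
  have : -s ∈ (-S)ᶜ := by simpa [Finset.mem_neg'] using hsS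
  exact (Finset.mem_sdiff.mp (hRT this)).2 hs

theorem cyclicCode_sdiff_inf_dualCode (hα : IsPrimitiveRoot α n) {S A : Finset (ZMod n)}
    (hS : IsUnionOfCyclotomicCosets (Fintype.card F) S)
    (hA : IsUnionOfCyclotomicCosets (Fintype.card F) A) (hAS : A ⊆ S) (hAneg : -A = A)
    (hself : (-S)ᶜ ⊆ S) :
    cyclicCode F α (S \ A) ⊓ dualCode (cyclicCode F α (S \ A)) = cyclicCode F α S := by
  have hq := isUnit_card_of_isPrimitiveRoot (F := F) hα
  rw [dualCode_cyclicCode hα (hS.sdiff hq hA), ← cyclicCode_union]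
  congr 1
  ext t
  have hAt : -t ∈ A ↔ t ∈ A := by rw [← Finset.mem_neg', hAneg]
  have hSt : -t ∉ S → t ∈ S := fun h => hself (by simpa [Finset.mem_neg'] using h)
  have := @hAS t
  simp only [Finset.mem_union, Finset.mem_sdiff, Finset.mem_compl, Finset.mem_neg', hAt]
  tauto

end Cyclic

theorem cyclic_subsystem_codes_euclidean_general
    (p : ℕ) (F : Type) [Field F] [Fintype F] [CharP F p]
    (n k r : ℕ) (hn : 0 < n)
    (E : Type) [Field E] [Algebra F E] (α : E) (hα : IsPrimitiveRoot α n)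
    (D C : Submodule F (Fin n → F)) (TD TDperp T : Finset (ZMod n))
    -- `T_D` and `T` are unions of cyclotomic cosets
    (hTDcl : ∀ t ∈ TD, (Fintype.card F : ZMod n) * t ∈ TD)
    (hTcl : ∀ t ∈ T, (Fintype.card F : ZMod n) * t ∈ T)
    -- `T_D` is the defining set of `D`
    (hDdef : ∀ c : Fin n → F, c ∈ D ↔
      ∀ t ∈ TD, ∑ i : Fin n, algebraMap F E (c i) * α ^ (t * ((i : ℕ) : ZMod n)).val = 0)
    -- `T_{D^⊥}` is the defining set of `D^⊥`
    (hDperpdef : ∀ c : Fin n → F, c ∈ euclDual (↑D : Set (Fin n → F)) ↔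
      ∀ t ∈ TDperp, ∑ i : Fin n, algebraMap F E (c i) * α ^ (t * ((i : ℕ) : ZMod n)).val = 0)
    -- `D` is self-orthogonal and `k`-dimensional
    (hso : (↑D : Set (Fin n → F)) ⊆ euclDual ↑D)
    (hk : Module.finrank F D = k)
    (hT : T ⊆ TD \ TDperp)
    -- `C` is the cyclic code with defining set `T_C = T_D \ (T ∪ T^{−1})`
    (hCdef : ∀ c : Fin n → F, c ∈ C ↔
      ∀ t ∈ TD \ (T ∪ T.image (fun s => -s)),
        ∑ i : Fin n, algebraMap F E (c i) * α ^ (t * ((i : ℕ) : ZMod n)).val = 0)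
    (hr : r = (T ∪ T.image (fun s => -s)).card) (hrlt : r < n - 2 * k) :
    (↑C ∩ euclDual ↑C : Set (Fin n → F)) = ↑D ∧
    Module.finrank F C = k + r ∧
    ∃ Q : AddSubgroup ((Fin n → F) × (Fin n → F)),
      IsSubsysCode p Q (Fintype.card F ^ (n - 2 * k - r)) (Fintype.card F ^ r)
        (minHwt (euclDual (↑D : Set (Fin n → F)) \ ↑C)) := by
  have : NeZero n := ⟨hn.ne'⟩
  have hTDq : IsUnionOfCyclotomicCosets (Fintype.card F) TD := hTDcl
  have hTq : IsUnionOfCyclotomicCosets (Fintype.card F) T := hTcl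
  have hAq := hTq.union hTq.neg
  have hD : D = cyclicCode F α TD := SetLike.ext fun c => (hDdef c).trans mem_cyclicCode.symm
  have hC : C = cyclicCode F α (TD \ (T ∪ -T)) :=
    SetLike.ext fun c => (hCdef c).trans mem_cyclicCode.symm
  have hDperp : dualCode D = cyclicCode F α TDperp :=
    SetLike.ext fun c => (coe_dualCode D ▸ hDperpdef c).trans mem_cyclicCode.symm
  have hself : (-TD)ᶜ ⊆ TD := subset_of_cyclicCode_le hα hTDq <| by
    rwa [← dualCode_cyclicCode hα hTDq, ← hD, ← SetLike.coe_subset_coe, coe_dualCode]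
  have hnegT : -T ⊆ TD := neg_subset_of_disjoint_of_dualCode_eq hα hTDq hTq (hD ▸ hDperp)
    (Finset.disjoint_left.mpr fun t ht => (Finset.mem_sdiff.mp (hT ht)).2)
  have hA : T ∪ -T ⊆ TD := Finset.union_subset (hT.trans Finset.sdiff_subset) hnegT
  have hCD : C ⊓ dualCode C = D := by
    rw [hC, hD]
    exact cyclicCode_sdiff_inf_dualCode hα hTDq hAq hA
      (by ext; simp only [Finset.mem_neg', Finset.mem_union, neg_neg, or_comm]) hself
  have hdimC : Module.finrank F C = k + r := by
    rw [hC, finrank_cyclicCode_sdiff hα hTDq hAq hA, ← hD, hk, hr]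
    rfl
  have hDC : ¬ dualCode D ≤ C := fun h => by
    have := Submodule.finrank_mono h
    rw [finrank_dualCode, hk, hdimC] at this
    omega
  refine ⟨?_, hdimC, (C.prod C).toAddSubgroup, ?_⟩
  · rw [← coe_dualCode, ← Submodule.coe_inf, hCD]
  · rw [← coe_dualCode]
    exact isSubsysCode_prod p hCD hDC hk hdimC (by omega)

/-- Cyclic subsystem codes, Euclidean case.
Let `D` be a `k`-dimensional self-orthogonal cyclic code of length `n` over `F_q`
with `gcd(n,q) = 1`, with defining sets `T_D` and `T_{D^⊥}` for `D` and `D^⊥`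
(w.r.t. a primitive `n`-th root of unity `α`).  If `T ⊆ T_D \ T_{D^⊥}` is a
union of cyclotomic cosets and `C` is the cyclic code with defining set
`T_C = T_D \ (T ∪ T^{−1})`, and `r = |T ∪ T^{−1}|` satisfies `0 ≤ r < n − 2k`,
then `C ∩ C^⊥ = D`, `dim C = k + r`, and there exists an
`[[n, n−2k−r, r, wt(D^⊥ \ C)]]_q` Clifford subsystem code. -/
theorem cyclic_subsystem_codes_euclidean
    (p : ℕ) (hp : p.Prime) (F : Type) [Field F] [Fintype F] [CharP F p]
    (n k r : ℕ) (hn : 0 < n) (hgcd : Nat.gcd n (Fintype.card F) = 1)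
    (E : Type) [Field E] [Algebra F E] (α : E) (hα : IsPrimitiveRoot α n)
    (D C : Submodule F (Fin n → F)) (TD TDperp T : Finset (ZMod n))
    -- `T_D` and `T` are unions of cyclotomic cosets
    (hTDcl : ∀ t ∈ TD, (Fintype.card F : ZMod n) * t ∈ TD)
    (hTcl : ∀ t ∈ T, (Fintype.card F : ZMod n) * t ∈ T)
    -- `T_D` is the defining set of `D`
    (hDdef : ∀ c : Fin n → F, c ∈ D ↔
      ∀ t ∈ TD, ∑ i : Fin n, algebraMap F E (c i) * α ^ (t * ((i : ℕ) : ZMod n)).val = 0)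
    -- `T_{D^⊥}` is the defining set of `D^⊥`
    (hDperpdef : ∀ c : Fin n → F, c ∈ euclDual (↑D : Set (Fin n → F)) ↔
      ∀ t ∈ TDperp, ∑ i : Fin n, algebraMap F E (c i) * α ^ (t * ((i : ℕ) : ZMod n)).val = 0)
    -- `D` is self-orthogonal and `k`-dimensional
    (hso : (↑D : Set (Fin n → F)) ⊆ euclDual ↑D)
    (hk : Module.finrank F D = k)
    (hT : T ⊆ TD \ TDperp)
    -- `C` is the cyclic code with defining set `T_C = T_D \ (T ∪ T^{−1})`
    (hCdef : ∀ c : Fin n → F, c ∈ C ↔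
      ∀ t ∈ TD \ (T ∪ T.image (fun s => -s)),
        ∑ i : Fin n, algebraMap F E (c i) * α ^ (t * ((i : ℕ) : ZMod n)).val = 0)
    (hr : r = (T ∪ T.image (fun s => -s)).card) (hrlt : r < n - 2 * k) :
    (↑C ∩ euclDual ↑C : Set (Fin n → F)) = ↑D ∧
    Module.finrank F C = k + r ∧
    ∃ Q : AddSubgroup ((Fin n → F) × (Fin n → F)),
      IsSubsysCode p Q (Fintype.card F ^ (n - 2 * k - r)) (Fintype.card F ^ r)
        (minHwt (euclDual (↑D : Set (Fin n → F)) \ ↑C)) :=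
  cyclic_subsystem_codes_euclidean_general p F n k r hn E α hα D C TD TDperp T hTDcl hTcl hDdef
    hDperpdef hso hk hT hCdef hr hrlt
end

section
/- F_q-linear trading of subsystem dimension for co-subsystem dimension: Let q be a power of a prime p. If there exists an F_q-linear [[n,k,r,d]]_q Clifford subsystem code with k > 1 that is pure to d', then there exists an F_q-linear [[n, k−1, r+1, d_m]]_q Clifford subsystem code with d_m ≥ d that is pure to min{d, d'}. Moreover, if a pure F_q-linear [[n,1,r,d]]_q Clifford subsystem code exists, then there exists an F_q-linear [[n,0,r+1,d]]_q Clifford subsystem code. -/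
open Finset

/-!
For an `F_q`-linear code `C` the trace-symplectic dual of `C` is its orthogonal for the
`F_q`-bilinear symplectic form `ω`, so everything is linear algebra in `(F_q^{2n}, ω)`: with
`D = C ∩ C^⊥`, the parameters say `dim C = n + r - k` and `dim D = n - k - r`. If `k ≥ 1`, then
`C^⊥ ⊄ C`, so `C^⊥` contains a hyperbolic pair `x, y` (`ω x y ≠ 0`), and `C' = C + span {x, y}`
has dimension `dim C + 2` and the same radical `D`: one logical qudit of `C` has become a gauge
qudit of `C'`. As `C ⊆ C' ⊆ D^⊥`, the set `D^⊥ \ C'` lies in `D^⊥ \ C`, so the distance can only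
grow, and a nonzero element of `C'` lies in `C` or in `D^⊥ \ C`, which gives purity to
`min d d'`. For `k = 1` one gets `C' = D^⊥`, and purity of `C` makes `swt (D^⊥) = d`.
-/

open Module Submodule

theorem exists_mem_diff_ne_zero_of_lt {R M : Type*} [Semiring R] [AddCommMonoid M]
    [Module R M] {U S : Submodule R M} (h : U < S) : ∃ v ∈ (S : Set M) \ U, v ≠ 0 := by
  obtain ⟨v, hvS, hvU⟩ := SetLike.exists_of_lt h
  exact ⟨v, ⟨hvS, hvU⟩, fun h0 => hvU (h0 ▸ U.zero_mem)⟩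

namespace LinearMap.BilinForm

variable {K V : Type*} [Field K] [AddCommGroup V] [Module K V] {B : LinearMap.BilinForm K V}

theorem sup_orthogonal_le_orthogonal_inf (hB : B.IsRefl) (W : Submodule K V) :
    W ⊔ B.orthogonal W ≤ B.orthogonal (W ⊓ B.orthogonal W) :=
  sup_le (fun _ hw _ hv => hB _ _ ((mem_inf.1 hv).2 _ hw)) (orthogonal_le inf_le_left)

theorem apply_add_smul_add_smul (hB : B.IsAlt) {W : Submodule K V} {w x : V} (hw : w ∈ W)
    (hx : x ∈ B.orthogonal W) (a b : K) (y : V) :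
    B x (w + (a • x + b • y)) = b * B x y := by
  simp [hB.isRefl _ _ (hx w hw), hB.self_eq_zero]

theorem coeffs_eq_zero_of_apply_eq_zero (hB : B.IsAlt) {W : Submodule K V} {w x y : V} {a b : K}
    (hw : w ∈ W) (hx : x ∈ B.orthogonal W) (hy : y ∈ B.orthogonal W) (hxy : B x y ≠ 0)
    (hvx : B x (w + (a • x + b • y)) = 0) (hvy : B y (w + (a • x + b • y)) = 0) :
    a = 0 ∧ b = 0 := by
  rw [apply_add_smul_add_smul hB hw hx] at hvx
  rw [add_comm (a • x), apply_add_smul_add_smul hB hw hy, ← LinearMap.IsAlt.neg hB x y] at hvy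
  exact ⟨(mul_eq_zero.1 hvy).resolve_right (neg_ne_zero.2 hxy),
    (mul_eq_zero.1 hvx).resolve_right hxy⟩

theorem finrank_sup_span_pair [FiniteDimensional K V] (hB : B.IsAlt) {W : Submodule K V}
    {x y : V} (hx : x ∈ B.orthogonal W) (hy : y ∈ B.orthogonal W) (hxy : B x y ≠ 0) :
    finrank K ↥(W ⊔ span K {x, y}) = finrank K W + 2 := by
  have hindep : LinearIndependent K ![x, y] := by
    refine LinearIndependent.pair_iff.2 fun s t hst => ?_
    refine coeffs_eq_zero_of_apply_eq_zero hB W.zero_mem hx hy hxy ?_ ?_ <;>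
      rw [zero_add, hst, map_zero]
  have hdisj : W ⊓ span K {x, y} = ⊥ := by
    refine (Submodule.eq_bot_iff _).2 fun z hz => ?_
    obtain ⟨a, b, rfl⟩ := mem_span_pair.1 (mem_inf.1 hz).2
    have hsum : -(a • x + b • y) + (a • x + b • y) = 0 := neg_add_cancel _
    obtain ⟨rfl, rfl⟩ := coeffs_eq_zero_of_apply_eq_zero hB (neg_mem (mem_inf.1 hz).1) hx hy hxy
      (by rw [hsum, map_zero]) (by rw [hsum, map_zero])
    simp
  have hpair : finrank K (span K {x, y}) = 2 := by
    rw [← Matrix.range_cons_cons_empty x y ![], finrank_span_eq_card hindep, Fintype.card_fin]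
  have := finrank_sup_add_finrank_inf_eq W (span K {x, y})
  rw [hdisj, finrank_bot, hpair] at this
  omega

theorem sup_span_pair_inf_orthogonal (hB : B.IsAlt) {W : Submodule K V} {x y : V}
    (hx : x ∈ B.orthogonal W) (hy : y ∈ B.orthogonal W) (hxy : B x y ≠ 0) :
    (W ⊔ span K {x, y}) ⊓ B.orthogonal (W ⊔ span K {x, y}) = W ⊓ B.orthogonal W := by
  refine le_antisymm (fun v hv => ?_) (le_inf (inf_le_left.trans le_sup_left) ?_)
  · obtain ⟨hvW', hv⟩ := mem_inf.1 hv
    obtain ⟨w, hw, _, hu, rfl⟩ := mem_sup.1 hvW'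
    obtain ⟨a, b, rfl⟩ := mem_span_pair.1 hu
    have hspan : ∀ z ∈ ({x, y} : Set V), z ∈ W ⊔ span K {x, y} :=
      fun z hz => mem_sup_right (subset_span hz)
    obtain ⟨rfl, rfl⟩ := coeffs_eq_zero_of_apply_eq_zero hB hw hx hy hxy
      (hv x (hspan x (by simp))) (hv y (hspan y (by simp)))
    simp only [zero_smul, add_zero]
    exact mem_inf.2 ⟨hw, orthogonal_le le_sup_left (by simpa using hv)⟩
  · have hle : W ⊔ span K {x, y} ≤ B.orthogonal (W ⊓ B.orthogonal W) :=
      (sup_le_sup_left (span_le.2 (Set.pair_subset hx hy)) W).trans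
        (sup_orthogonal_le_orthogonal_inf hB.isRefl W)
    exact (le_orthogonal_orthogonal hB.isRefl).trans (orthogonal_le hle)

theorem exists_le_finrank_add_two_inf_orthogonal_eq [FiniteDimensional K V]
    (hnd : B.Nondegenerate) (hB : B.IsAlt) {W : Submodule K V} (hW : ¬ B.orthogonal W ≤ W) :
    ∃ W' : Submodule K V, W ≤ W' ∧ finrank K W' = finrank K W + 2 ∧
      W' ⊓ B.orthogonal W' = W ⊓ B.orthogonal W := by
  obtain ⟨x, hx, hxW⟩ := SetLike.not_le_iff_exists.1 hW
  obtain ⟨y, hy, hyx⟩ : ∃ y ∈ B.orthogonal W, B y x ≠ 0 := by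
    by_contra! h
    exact hxW (orthogonal_orthogonal hnd hB.isRefl W ▸ h)
  exact ⟨W ⊔ span K {y, x}, le_sup_left, finrank_sup_span_pair hB hy hx hyx,
    sup_span_pair_inf_orthogonal hB hy hx hyx⟩

end LinearMap.BilinForm

section SymplecticForm

variable (F : Type*) [Field F] (n : ℕ)

noncomputable def sympForm : LinearMap.BilinForm F ((Fin n → F) × (Fin n → F)) :=
  LinearMap.mk₂ F (fun u v => ∑ i, (v.1 i * u.2 i - u.1 i * v.2 i))
    (fun _ _ _ => by
      simp only [Prod.fst_add, Prod.snd_add, Pi.add_apply, ← Finset.sum_add_distrib]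
      exact Finset.sum_congr rfl fun _ _ => by ring)
    (fun _ _ _ => by
      simp only [Prod.smul_fst, Prod.smul_snd, Pi.smul_apply, smul_eq_mul, Finset.mul_sum]
      exact Finset.sum_congr rfl fun _ _ => by ring)
    (fun _ _ _ => by
      simp only [Prod.fst_add, Prod.snd_add, Pi.add_apply, ← Finset.sum_add_distrib]
      exact Finset.sum_congr rfl fun _ _ => by ring)
    (fun _ _ _ => by
      simp only [Prod.smul_fst, Prod.smul_snd, Pi.smul_apply, smul_eq_mul, Finset.mul_sum]
      exact Finset.sum_congr rfl fun _ _ => by ring)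

local notation "ω" => sympForm F n

variable {F n}

theorem sympForm_apply (u v : (Fin n → F) × (Fin n → F)) :
    ω u v = ∑ i, (v.1 i * u.2 i - u.1 i * v.2 i) := rfl

theorem sympForm_isAlt : LinearMap.BilinForm.IsAlt ω := fun u => by simp [sympForm_apply]

theorem sympForm_nondegenerate : (ω).Nondegenerate := by
  refine (LinearMap.IsRefl.nondegenerate_iff_separatingLeft (B := ω) sympForm_isAlt.isRefl).2
    fun u hu => ?_
  ext j
  · simpa [sympForm_apply, Pi.single_apply] using hu (0, Pi.single j 1)
  · simpa [sympForm_apply, Pi.single_apply] using hu (Pi.single j 1, 0)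

end SymplecticForm

section Code

open LinearMap.BilinForm

variable {F : Type} [Field F] {n : ℕ}

local notation "𝕍" => (Fin n → F) × (Fin n → F)
local notation "ω" => sympForm F n

theorem finrank_sympForm_orthogonal_add (X : Submodule F 𝕍) :
    finrank F ((ω).orthogonal X) + finrank F X = 2 * n := by
  have hV : finrank F 𝕍 = 2 * n := by simp [two_mul]
  rw [LinearMap.BilinForm.finrank_orthogonal sympForm_nondegenerate, hV]
  have := X.finrank_le
  omega

theorem FqLinear.exists_toAddSubgroup_eq {C : AddSubgroup 𝕍} (hC : FqLinear C) :
    ∃ W : Submodule F 𝕍, W.toAddSubgroup = C :=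
  ⟨{ C with smul_mem' := hC }, rfl⟩

theorem fqLinear_toAddSubgroup (W : Submodule F 𝕍) : FqLinear W.toAddSubgroup :=
  fun a _ hv => W.smul_mem a hv

theorem minSwt_le {S : Set 𝕍} {v : 𝕍} (hv : v ∈ S) (h0 : v ≠ 0) : minSwt S ≤ swt v :=
  Nat.sInf_le ⟨v, ⟨hv, h0⟩, rfl⟩

theorem le_minSwt {S : Set 𝕍} {m : ℕ} (hne : ∃ v ∈ S, v ≠ 0)
    (h : ∀ v ∈ S, v ≠ 0 → m ≤ swt v) : m ≤ minSwt S := by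
  obtain ⟨v, hv, h0⟩ := hne
  exact le_csInf ⟨_, v, ⟨hv, h0⟩, rfl⟩ fun _ ⟨w, ⟨hw, hw0⟩, hm⟩ => hm ▸ h w hw hw0

theorem minSwt_anti {S T : Set 𝕍} (hTS : T ⊆ S) (hne : ∃ v ∈ T, v ≠ 0) :
    minSwt S ≤ minSwt T :=
  le_minSwt hne fun _ hv h0 => minSwt_le (hTS hv) h0

theorem PureTo.min_minSwt_diff_le_swt {C : AddSubgroup 𝕍} {d' : ℕ} (hC : PureTo C d')
    {S : Set 𝕍} {v : 𝕍} (hv : v ∈ S) (h0 : v ≠ 0) : min (minSwt (S \ C)) d' ≤ swt v := by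
  by_cases hvC : v ∈ C
  · exact (min_le_right _ _).trans (hC v hvC h0)
  · exact (min_le_left _ _).trans (minSwt_le ⟨hv, hvC⟩ h0)

theorem minSwt_eq_minSwt_diff_of_pureTo {C : AddSubgroup 𝕍} {S : Set 𝕍}
    (hC : PureTo C (minSwt (S \ C))) (hne : ∃ v ∈ S \ C, v ≠ 0) :
    minSwt S = minSwt (S \ C) := by
  obtain ⟨v, hv, h0⟩ := hne
  refine le_antisymm (minSwt_anti Set.sdiff_subset ⟨v, hv, h0⟩) (le_minSwt ⟨v, hv.1, h0⟩ ?_)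
  exact fun w hw hw0 => min_self (minSwt (S \ C)) ▸ hC.min_minSwt_diff_le_swt hw hw0

theorem orthogonal_inf_orthogonal_eq_iff {W : Submodule F 𝕍} {k r : ℕ}
    (hrad : finrank F ↥(W ⊓ (ω).orthogonal W) + (k + r) = n) (hdim : finrank F W + k = n + r) :
    (ω).orthogonal (W ⊓ (ω).orthogonal W) = W ↔ k = 0 := by
  have hS := finrank_sympForm_orthogonal_add (W ⊓ (ω).orthogonal W)
  refine ⟨fun h => by rw [h] at hS; omega, fun hk => ?_⟩
  have hWS := le_sup_left.trans (sup_orthogonal_le_orthogonal_inf sympForm_isAlt.isRefl W)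
  exact (Submodule.eq_of_le_of_finrank_eq hWS (by omega)).symm

theorem exists_gauge_extension {W : Submodule F 𝕍} {k r : ℕ} (hk : k ≠ 0)
    (hrad : finrank F ↥(W ⊓ (ω).orthogonal W) + (k + r) = n) (hdim : finrank F W + k = n + r) :
    ∃ W' : Submodule F 𝕍, W ≤ W' ∧ W' ≤ (ω).orthogonal (W ⊓ (ω).orthogonal W) ∧
      W' ⊓ (ω).orthogonal W' = W ⊓ (ω).orthogonal W ∧ finrank F W' + (k - 1) = n + (r + 1) := by
  have hW : ¬ (ω).orthogonal W ≤ W := fun h => by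
    have := finrank_sympForm_orthogonal_add W
    rw [inf_eq_right.2 h] at hrad
    omega
  obtain ⟨W', hWW', hdim', hrad'⟩ :=
    exists_le_finrank_add_two_inf_orthogonal_eq sympForm_nondegenerate sympForm_isAlt hW
  refine ⟨W', hWW', ?_, hrad', by omega⟩
  rw [← hrad']
  exact le_sup_left.trans (sup_orthogonal_le_orthogonal_inf sympForm_isAlt.isRefl W')

section TraceForm

variable {p : ℕ} [Fintype F] [CharP F p]

theorem eq_zero_of_forall_trace_mul_eq_zero {a : F}
    (h : ∀ γ : F, (letI := ZMod.algebra F p; Algebra.trace (ZMod p) F (a * γ)) = 0) : a = 0 := by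
  obtain rfl := ringChar.eq F p
  let _ := ZMod.algebra F (ringChar F)
  by_contra ha
  obtain ⟨b, hb⟩ := FiniteField.trace_to_zmod_nondegenerate F ha
  exact hb (h b)

theorem sympDual_coe_eq_orthogonal (W : Submodule F 𝕍) :
    sympDual p (W : Set 𝕍) = (ω).orthogonal W := by
  let _ := ZMod.algebra F p
  ext v
  refine ⟨fun hv w hw => sympForm_isAlt.isRefl _ _ ?_, fun hv w hw => ?_⟩
  · refine eq_zero_of_forall_trace_mul_eq_zero fun γ => ?_
    have := hv (γ • w) (W.smul_mem γ hw)
    rwa [trSympForm, ← sympForm_apply, map_smul, smul_eq_mul, mul_comm] at this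
  · change Algebra.trace (ZMod p) F (ω v w) = 0
    rw [sympForm_isAlt.isRefl _ _ (hv w hw), map_zero]

theorem isSubsysCode_toAddSubgroup_iff (W : Submodule F 𝕍) (k r d : ℕ) :
    IsSubsysCode p W.toAddSubgroup (Fintype.card F ^ k) (Fintype.card F ^ r) d ↔
      finrank F ↥(W ⊓ (ω).orthogonal W) + (k + r) = n ∧ finrank F W + k = n + r ∧
      (k = 0 → d = minSwt ((ω).orthogonal (W ⊓ (ω).orthogonal W) : Set 𝕍)) ∧
      (k ≠ 0 → d = minSwt (((ω).orthogonal (W ⊓ (ω).orthogonal W) : Set 𝕍) \ W)) := by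
  have hq : 1 < Fintype.card F := Fintype.one_lt_card
  have hcard (X : Submodule F 𝕍) : Nat.card (X : Set 𝕍) = Fintype.card F ^ finrank F X := by
    rw [← Nat.card_eq_fintype_card]
    exact Module.natCard_eq_pow_finrank
  have hcardW : Nat.card W.toAddSubgroup = Fintype.card F ^ finrank F W := hcard W
  simp only [IsSubsysCode, Submodule.coe_toAddSubgroup, sympDual_coe_eq_orthogonal,
    ← Submodule.coe_inf, hcard, hcardW, ← pow_add, pow_right_inj₀ (zero_lt_one.trans hq) hq.ne',
    ne_eq, SetLike.coe_set_eq]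
  refine and_congr_right fun hrad => and_congr_right fun hdim => ?_
  rw [orthogonal_inf_orthogonal_eq_iff hrad hdim]

end TraceForm

end Code

theorem trade_subsystem_for_cosubsystem_linear_general
    (p : ℕ) (F : Type) [Field F] [Fintype F] [CharP F p]
    (n k r d d' : ℕ) :
    ((1 < k ∧ ∃ C : AddSubgroup ((Fin n → F) × (Fin n → F)),
        IsSubsysCode p C (Fintype.card F ^ k) (Fintype.card F ^ r) d ∧
        FqLinear C ∧ PureTo C d') →
      ∃ dm : ℕ, d ≤ dm ∧
        ∃ C : AddSubgroup ((Fin n → F) × (Fin n → F)),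
          IsSubsysCode p C (Fintype.card F ^ (k - 1)) (Fintype.card F ^ (r + 1)) dm ∧
          FqLinear C ∧ PureTo C (min d d')) ∧
    ((∃ C : AddSubgroup ((Fin n → F) × (Fin n → F)),
        IsSubsysCode p C (Fintype.card F ^ 1) (Fintype.card F ^ r) d ∧
        FqLinear C ∧ PureTo C d) →
      ∃ C : AddSubgroup ((Fin n → F) × (Fin n → F)),
        IsSubsysCode p C (Fintype.card F ^ 0) (Fintype.card F ^ (r + 1)) d ∧
        FqLinear C) := by
  refine ⟨fun ⟨hk, C, hC, hlin, hpure⟩ => ?_, fun ⟨C, hC, hlin, hpure⟩ => ?_⟩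
  · obtain ⟨W, rfl⟩ := hlin.exists_toAddSubgroup_eq
    obtain ⟨hrad, hdim, -, hd⟩ := (isSubsysCode_toAddSubgroup_iff W k r d).1 hC
    obtain rfl := hd (by omega)
    obtain ⟨W', hWW', hW'S, hrad', hdim'⟩ := exists_gauge_extension (by omega) hrad hdim
    have hS := finrank_sympForm_orthogonal_add (W ⊓ (sympForm F n).orthogonal W)
    have hne := exists_mem_diff_ne_zero_of_lt
      (Submodule.lt_of_le_of_finrank_lt_finrank hW'S (by omega))
    refine ⟨_, minSwt_anti (Set.sdiff_subset_sdiff_right hWW') hne, W'.toAddSubgroup, ?_,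
      fqLinear_toAddSubgroup W', fun v hv h0 => hpure.min_minSwt_diff_le_swt (hW'S hv) h0⟩
    rw [isSubsysCode_toAddSubgroup_iff, hrad']
    exact ⟨by omega, hdim', fun _ => by omega, fun _ => rfl⟩
  · obtain ⟨W, rfl⟩ := hlin.exists_toAddSubgroup_eq
    obtain ⟨hrad, hdim, -, hd⟩ := (isSubsysCode_toAddSubgroup_iff W 1 r d).1 hC
    obtain rfl := hd one_ne_zero
    obtain ⟨W', hWW', hW'S, hrad', hdim'⟩ :=
      exists_gauge_extension one_ne_zero hrad hdim
    have hS := finrank_sympForm_orthogonal_add (W ⊓ (sympForm F n).orthogonal W)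
    have hne := exists_mem_diff_ne_zero_of_lt
      (Submodule.lt_of_le_of_finrank_lt_finrank (hWW'.trans hW'S) (by omega))
    refine ⟨W'.toAddSubgroup, ?_, fqLinear_toAddSubgroup W'⟩
    rw [isSubsysCode_toAddSubgroup_iff, hrad']
    exact ⟨by omega, hdim', fun _ => (minSwt_eq_minSwt_diff_of_pureTo hpure hne).symm,
      fun h => absurd rfl h⟩

/-- `F_q`-linear trading of subsystem dimension for co-subsystem
dimension.  If there exists an `F_q`-linear `[[n,k,r,d]]_q` Clifford subsystem
code with `k > 1` that is pure to `d'`, then there exists an `F_q`-linear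
`[[n, k−1, r+1, d_m]]_q` Clifford subsystem code with `d_m ≥ d` that is pure to
`min{d, d'}`.  Moreover, if a pure `F_q`-linear `[[n,1,r,d]]_q` Clifford
subsystem code exists, then there exists an `F_q`-linear `[[n,0,r+1,d]]_q`
Clifford subsystem code. -/
theorem trade_subsystem_for_cosubsystem_linear
    (p : ℕ) (hp : p.Prime) (F : Type) [Field F] [Fintype F] [CharP F p]
    (n k r d d' : ℕ) :
    ((1 < k ∧ ∃ C : AddSubgroup ((Fin n → F) × (Fin n → F)),
        IsSubsysCode p C (Fintype.card F ^ k) (Fintype.card F ^ r) d ∧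
        FqLinear C ∧ PureTo C d') →
      ∃ dm : ℕ, d ≤ dm ∧
        ∃ C : AddSubgroup ((Fin n → F) × (Fin n → F)),
          IsSubsysCode p C (Fintype.card F ^ (k - 1)) (Fintype.card F ^ (r + 1)) dm ∧
          FqLinear C ∧ PureTo C (min d d')) ∧
    ((∃ C : AddSubgroup ((Fin n → F) × (Fin n → F)),
        IsSubsysCode p C (Fintype.card F ^ 1) (Fintype.card F ^ r) d ∧
        FqLinear C ∧ PureTo C d) →
      ∃ C : AddSubgroup ((Fin n → F) × (Fin n → F)),
        IsSubsysCode p C (Fintype.card F ^ 0) (Fintype.card F ^ (r + 1)) d ∧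
        FqLinear C) :=
  trade_subsystem_for_cosubsystem_linear_general p F n k r d d'
end
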